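/- arXiv:2308.05029 — 4 statements merged into one kernel-verified Lean document; each statement's English description precedes it below -/
import Mathlib

section
/- Let χ : Kˣ → ℂˣ be a group homomorphism satisfying χ(c(x)) = χ(x) for all x ∈ Kˣ. Then there exists a group homomorphism μ : Fˣ → ℂˣ such that χ(x) = μ(N_{K/F}(x)) for all x ∈ Kˣ, and every such μ satisfies μ(y)² = χ(y) for all y ∈ Fˣ. (Existence of the character μ with χ = μ ∘ N_{K/F} and μ² = χ|_{Fˣ}, used to describe π⁺ when χ is Galois-invariant.) -/
/-!
By Hilbert 90, an element of norm one in `K` has the form `β / c β`, so a Galois-invariant `χ`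
kills the kernel of the norm `Kˣ → Fˣ` and therefore induces a character of its image. Since `ℂˣ`
is divisible, it is an injective `ℤ`-module, and that character extends to all of `Fˣ`. For
`y ∈ Fˣ` the norm of `y` is `y²`, which gives `μ(y)² = χ(y)`.
-/

open Module Function

instance Additive.divisibleByInt {D : Type*} [DivInvMonoid D] [RootableBy D ℤ] :
    DivisibleBy (Additive D) ℤ where
  div a n := Additive.ofMul (RootableBy.root a.toMul n)
  div_zero a := congrArg Additive.ofMul (RootableBy.root_zero a.toMul)
  div_cancel a hn := congrArg Additive.ofMul (RootableBy.root_cancel a.toMul hn)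

noncomputable instance IsAlgClosed.unitsRootableByNat {k : Type*} [Field k] [IsAlgClosed k] :
    RootableBy kˣ ℕ :=
  rootableByOfPowLeftSurj _ _ fun {n} hn x => by
    obtain ⟨z, hz⟩ := IsAlgClosed.exists_pow_nat_eq (x : k) (Nat.pos_of_ne_zero hn)
    have hz0 : z ≠ 0 := by
      rintro rfl
      exact x.ne_zero (by rw [← hz, zero_pow hn])
    exact ⟨Units.mk0 z hz0, Units.ext hz⟩

noncomputable instance IsAlgClosed.unitsRootableByInt {k : Type*} [Field k] [IsAlgClosed k] :
    RootableBy kˣ ℤ :=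
  Group.rootableByIntOfRootableByNat _

namespace MonoidHom

variable {G H D : Type*} [CommGroup G] [CommGroup H] [CommGroup D] [RootableBy D ℤ]

theorem exists_comp_eq_of_injective {f : G →* H} (hf : Injective f) (g : G →* D) :
    ∃ h : H →* D, h.comp f = g := by
  obtain ⟨h, hh⟩ := (Module.Baer.of_divisible (Additive D)).extension_property_addMonoidHom
    (toAdditive f) hf (toAdditive g)
  exact ⟨toAdditive.symm h, toAdditive.injective hh⟩

theorem exists_comp_eq_of_ker_le (f : G →* H) {g : G →* D} (hg : f.ker ≤ g.ker) :
    ∃ h : H →* D, h.comp f = g := by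
  obtain ⟨h, hh⟩ := exists_comp_eq_of_injective (QuotientGroup.kerLift_injective f)
    (QuotientGroup.lift f.ker g hg)
  exact ⟨h, ext fun x => DFunLike.congr_fun hh (x : G ⧸ f.ker)⟩

end MonoidHom

theorem eq_one_or_eq_of_card_eq_two {G : Type*} [Group G] (hG : Nat.card G = 2) {g : G}
    (hg : g ≠ 1) (σ : G) : σ = 1 ∨ σ = g := by
  obtain ⟨y, -, hy⟩ := (Nat.card_eq_two_iff' (1 : G)).mp hG
  exact or_iff_not_imp_left.mpr fun hσ => (hy σ hσ).trans (hy g hg).symm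

section QuadraticExtension

variable {F K : Type*} [Field F] [Field K] [Algebra F K] [IsGalois F K]

theorem card_aut_eq_two_of_finrank_eq_two (hdeg : finrank F K = 2) : Nat.card Gal(K/F) = 2 := by
  have := Module.finite_of_finrank_eq_succ hdeg
  rw [IsGalois.card_aut_eq_finrank, hdeg]

theorem algebraMap_norm_eq_mul_of_finrank_eq_two (hdeg : finrank F K = 2) {c : Gal(K/F)}
    (hc : c ≠ 1) (x : K) : algebraMap F K (Algebra.norm F x) = x * c x := by
  have := Module.finite_of_finrank_eq_succ hdeg
  rw [Algebra.norm_eq_prod_automorphisms, Fintype.prod_eq_mul 1 c hc.symm]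
  · rfl
  · rintro σ ⟨hσ1, hσc⟩
    exact (hσc <| (eq_one_or_eq_of_card_eq_two
      (card_aut_eq_two_of_finrank_eq_two hdeg) hc σ).resolve_left hσ1).elim

theorem exists_smul_div_eq_of_mul_apply_eq_one (hdeg : finrank F K = 2) {c : Gal(K/F)}
    (hc : c ≠ 1) {x : Kˣ} (hx : (x : K) * c x = 1) : ∃ β : Kˣ, c • β / β = x := by
  classical
  have := Module.finite_of_finrank_eq_succ hdeg
  have hσ := eq_one_or_eq_of_card_eq_two (card_aut_eq_two_of_finrank_eq_two hdeg) hc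
  have hcc : c * c = 1 := by
    rw [← sq, ← card_aut_eq_two_of_finrank_eq_two hdeg, pow_card_eq_one']
  let f : Gal(K/F) → Kˣ := fun σ => if σ = 1 then 1 else x
  have hf : groupCohomology.IsMulCocycle₁ f := by
    intro g h
    rcases hσ g with rfl | rfl <;> rcases hσ h with rfl | rfl
    · simp [f]
    · simp [f]
    · simp [f, hc]
    · ext
      simpa [f, hc, hcc, AlgEquiv.smul_units_def, mul_comm] using hx.symm
  obtain ⟨β, hβ⟩ := groupCohomology.isMulCoboundary₁_of_isMulCocycle₁_of_aut_to_units f hf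
  exact ⟨β, by simpa [f, hc] using hβ c⟩

end QuadraticExtension

theorem galois_invariant_char_factors_through_norm_general
    {F K : Type*} [Field F] [Field K]
    [Algebra F K] [IsGalois F K] (hdeg : Module.finrank F K = 2)
    (c : K ≃ₐ[F] K) (hc : c ≠ AlgEquiv.refl)
    (χ : Kˣ →* ℂˣ)
    (hχ : ∀ x : Kˣ, χ (Units.map (c : K →* K) x) = χ x) :
    (∃ μ : Fˣ →* ℂˣ,
      ∀ (x : Kˣ) (y : Fˣ), algebraMap F K (y : F) = (x : K) * c (x : K) → χ x = μ y) ∧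
    (∀ μ : Fˣ →* ℂˣ,
      (∀ (x : Kˣ) (y : Fˣ), algebraMap F K (y : F) = (x : K) * c (x : K) → χ x = μ y) →
      ∀ y : Fˣ, (μ y) ^ 2 = χ (Units.map (algebraMap F K : F →* K) y)) := by
  let N : Kˣ →* Fˣ := Units.map (Algebra.norm F : K →* F)
  have hN (x : Kˣ) : algebraMap F K (N x : F) = x * c x :=
    algebraMap_norm_eq_mul_of_finrank_eq_two hdeg hc x
  have hker : N.ker ≤ χ.ker := fun x hx => by
    obtain ⟨β, rfl⟩ := exists_smul_div_eq_of_mul_apply_eq_one hdeg hc (x := x)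
      (by rw [← hN, MonoidHom.mem_ker.mp hx, Units.val_one, map_one])
    rw [MonoidHom.mem_ker, map_div, AlgEquiv.smul_units_def, hχ, div_self']
  obtain ⟨μ, hμ⟩ := N.exists_comp_eq_of_ker_le hker
  refine ⟨⟨μ, fun x y hy => ?_⟩, fun μ hμ y => ?_⟩
  · obtain rfl : y = N x := Units.ext <| (algebraMap F K).injective <| hy.trans (hN x).symm
    exact (DFunLike.congr_fun hμ x).symm
  · rw [sq, ← map_mul]
    exact (hμ _ _ (by simp)).symm

/-- `F` and `K` are fields of characteristic zero, `K/F` is Galois of degree 2, and `c` is the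
unique nontrivial element of `Gal(K/F)`; the norm is `N_{K/F}(x) = x · c x`.  If
`χ : Kˣ → ℂˣ` is a Galois-invariant group homomorphism, then there exists a group homomorphism
`μ : Fˣ → ℂˣ` with `χ x = μ (N_{K/F} x)` for all `x ∈ Kˣ`, and every such `μ` satisfies
`μ(y)² = χ(y)` for all `y ∈ Fˣ` (with `Fˣ` viewed inside `Kˣ`). -/
theorem galois_invariant_char_factors_through_norm
    {F K : Type*} [Field F] [Field K] [CharZero F] [CharZero K]
    [Algebra F K] [IsGalois F K] (hdeg : Module.finrank F K = 2)
    (c : K ≃ₐ[F] K) (hc : c ≠ AlgEquiv.refl)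
    (χ : Kˣ →* ℂˣ)
    (hχ : ∀ x : Kˣ, χ (Units.map (c : K →* K) x) = χ x) :
    (∃ μ : Fˣ →* ℂˣ,
      ∀ (x : Kˣ) (y : Fˣ), algebraMap F K (y : F) = (x : K) * c (x : K) → χ x = μ y) ∧
    (∀ μ : Fˣ →* ℂˣ,
      (∀ (x : Kˣ) (y : Fˣ), algebraMap F K (y : F) = (x : K) * c (x : K) → χ x = μ y) →
      ∀ y : Fˣ, (μ y) ^ 2 = χ (Units.map (algebraMap F K : F →* K) y)) :=
  galois_invariant_char_factors_through_norm_general hdeg c hc χ hχ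
end

section
/- Let g be an n×n matrix over K such that g·A·g† = A for every n×n Hermitian matrix A over K. Then there exists λ ∈ K with λ·c(λ) = 1 such that g = λ·1ₙ (a scalar matrix). (The kernel of the conjugation action of the unitary group on Hermitian matrices is its center.) -/
/-!
Taking `A = 1` shows `g * g† = 1`, so `g† = g⁻¹` and `g A g† = A` says that `g` commutes with
`A`. Already the Hermitian matrices `Eᵢᵢ` and `Eᵢⱼ + Eⱼᵢ` have only scalars in their commutant,
because `Eᵢⱼ = Eᵢᵢ (Eᵢⱼ + Eⱼᵢ)` for `i ≠ j`. Finally `g * g† = 1` for `g = λ • 1` reads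
`λ · c λ = 1`.
-/

open Matrix

/-- The conjugate transpose `g† = (g.map c)ᵀ` of a matrix over `K`, with respect to the
involution `c` of `K`. -/
def dagger {K : Type*} [Field K] {n : ℕ} (c : K ≃+* K)
    (A : Matrix (Fin n) (Fin n) K) : Matrix (Fin n) (Fin n) K :=
  (A.map c)ᵀ

namespace Matrix

variable {n α : Type*} [Fintype n] [DecidableEq n] [Semiring α]

theorem mem_range_scalar_of_commute_single_self_of_commute_single_add_single
    {M : Matrix n n α} (hdiag : ∀ i, Commute (single i i 1) M)
    (hsymm : ∀ i j, Commute (single i j 1 + single j i 1) M) :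
    M ∈ Set.range (scalar n) :=
  mem_range_scalar_of_commute_single fun i j hij => by
    have hsingle : single i j (1 : α) = single i i 1 * (single i j 1 + single j i 1) := by
      rw [mul_add, single_mul_single_same, single_mul_single_of_ne (h := hij), add_zero, one_mul]
    show Commute (single i j 1) M
    rw [hsingle]
    exact (hdiag i).mul_left (hsymm i j)

end Matrix

section dagger

variable {K : Type*} [Field K] {n : ℕ} (c : K ≃+* K)

lemma dagger_one : dagger c (1 : Matrix (Fin n) (Fin n) K) = 1 := by
  simp [dagger]

lemma dagger_add (A B : Matrix (Fin n) (Fin n) K) :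
    dagger c (A + B) = dagger c A + dagger c B := by
  simp [dagger, Matrix.map_add]

@[simp]
lemma dagger_single (i j : Fin n) (a : K) : dagger c (single i j a) = single j i (c a) := by
  simp [dagger, transpose_single]

lemma dagger_scalar (a : K) : dagger c (scalar (Fin n) a) = scalar (Fin n) (c a) := by
  simp [dagger, scalar_apply, diagonal_map]

lemma commute_of_forall_mul_mul_dagger_eq {g : Matrix (Fin n) (Fin n) K}
    (hg : ∀ A, dagger c A = A → g * A * dagger c g = A)
    {A : Matrix (Fin n) (Fin n) K} (hA : dagger c A = A) : Commute A g := by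
  have hinv : dagger c g * g = 1 := mul_eq_one_comm.mp (by simpa using hg 1 (dagger_one c))
  calc A * g = g * A * dagger c g * g := by rw [hg A hA]
    _ = g * A := by rw [mul_assoc, hinv, mul_one]

end dagger

theorem fixing_all_hermitian_is_central_general
    {K : Type*} [Field K] (c : K ≃+* K)
    {n : ℕ} (g : Matrix (Fin n) (Fin n) K)
    (hg : ∀ A : Matrix (Fin n) (Fin n) K, dagger c A = A → g * A * dagger c g = A) :
    ∃ lam : K, lam * c lam = 1 ∧ g = lam • (1 : Matrix (Fin n) (Fin n) K) := by
  rcases n.eq_zero_or_pos with rfl | hn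
  · exact ⟨1, by simp, Subsingleton.elim _ _⟩
  have hcomm : ∀ A, dagger c A = A → Commute A g := fun _ =>
    commute_of_forall_mul_mul_dagger_eq c hg
  obtain ⟨lam, rfl⟩ := mem_range_scalar_of_commute_single_self_of_commute_single_add_single
    (fun i => hcomm _ (by simp)) (fun i j => hcomm _ (by simp [dagger_add, add_comm]))
  have hunit := congrFun₂ (hg 1 (dagger_one c)) ⟨0, hn⟩ ⟨0, hn⟩
  rw [mul_one, dagger_scalar] at hunit
  exact ⟨lam, by simpa [scalar_apply] using hunit, by rw [scalar_apply, smul_one_eq_diagonal]⟩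

/-- `K` is a field of characteristic zero with a ring automorphism `c` satisfying `c ∘ c = id`
and `c ≠ id`.  If `g` is an `n × n` matrix over `K` with `g A g† = A` for every Hermitian
`n × n` matrix `A`, then `g = λ · 1ₙ` is a scalar matrix for some `λ ∈ K` with
`λ · c λ = 1`: the kernel of the conjugation action of the unitary group on Hermitian
matrices is its center. -/
theorem fixing_all_hermitian_is_central
    {K : Type*} [Field K] [CharZero K] (c : K ≃+* K)
    (hcc : ∀ x, c (c x) = x) (hne : (c : K → K) ≠ id)
    {n : ℕ} (g : Matrix (Fin n) (Fin n) K)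
    (hg : ∀ A : Matrix (Fin n) (Fin n) K, dagger c A = A → g * A * dagger c g = A) :
    ∃ lam : K, lam * c lam = 1 ∧ g = lam • (1 : Matrix (Fin n) (Fin n) K) :=
  fixing_all_hermitian_is_central_general c g hg
end

section
/- Let g be a 3×3 matrix over K with g·Φ₃·g† = Φ₃, and let f₀ be the 3×3 matrix whose only nonzero entry is −1 in position (2,2). Then g·f₀·g† = f₀ if and only if the entries of g in positions (1,2), (3,2), (2,1), (2,3) are all zero and the (2,2) entry λ = g₂₂ satisfies λ·c(λ) = 1. (Computation of the stabilizer of f₀ in the unitary group U(Φ₃): it consists of the block matrices fixing the middle coordinate line, i.e. it is identified with U(V₂) × U₁.) -/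
open Matrix

/-- The matrix `Φ₃` whose `(1,3)`, `(2,2)`, `(3,1)` entries equal `-1` and whose other
entries are `0`. -/
def Phi3 (K : Type*) [Field K] : Matrix (Fin 3) (Fin 3) K :=
  !![0, 0, -1; 0, -1, 0; -1, 0, 0]

/-- The matrix `f₀` whose only nonzero entry is `-1` in position `(2,2)`. -/
def f0 (K : Type*) [Field K] : Matrix (Fin 3) (Fin 3) K :=
  !![0, 0, 0; 0, -1, 0; 0, 0, 0]

/-- `K` is a field of characteristic zero with a ring automorphism `c` satisfying `c ∘ c = id`
and `c ≠ id`.  Let `g` be a `3 × 3` matrix over `K` with `g Φ₃ g† = Φ₃`.  Then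
`g f₀ g† = f₀` if and only if the entries of `g` in positions `(1,2)`, `(3,2)`, `(2,1)`,
`(2,3)` (1-based) are zero and `λ = g₂₂` satisfies `λ · c λ = 1`.  This computes the
stabilizer of `f₀` in `U(Φ₃)`. -/
theorem stabilizer_of_f0_in_unitary_group
    {K : Type*} [Field K] [CharZero K] (c : K ≃+* K)
    (hcc : ∀ x, c (c x) = x) (hne : (c : K → K) ≠ id)
    (g : Matrix (Fin 3) (Fin 3) K) (hg : g * Phi3 K * dagger c g = Phi3 K) :
    g * f0 K * dagger c g = f0 K ↔
      g 0 1 = 0 ∧ g 2 1 = 0 ∧ g 1 0 = 0 ∧ g 1 2 = 0 ∧ g 1 1 * c (g 1 1) = 1 := by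

  constructor
  · intro hf
    have hPhi : Phi3 K * Phi3 K = 1 := by
      ext i j
      fin_cases i <;> fin_cases j <;>
        simp [Phi3, Matrix.mul_apply, Fin.sum_univ_three, Matrix.one_apply, Matrix.vecHead, Matrix.vecTail]
    have hgh : g * (Phi3 K * dagger c g * Phi3 K) = 1 := by
      have : g * (Phi3 K * dagger c g * Phi3 K) = (g * Phi3 K * dagger c g) * Phi3 K := by
        noncomm_ring
      rw [this, hg, hPhi]
    have hhg : (Phi3 K * dagger c g * Phi3 K) * g = 1 := mul_eq_one_comm.mp hgh
    have hE : g * (f0 K * Phi3 K) = (f0 K * Phi3 K) * g := by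
      have h1 : g * (f0 K * Phi3 K) * (Phi3 K * dagger c g * Phi3 K) = f0 K * Phi3 K := by
        have : g * (f0 K * Phi3 K) * (Phi3 K * dagger c g * Phi3 K)
            = (g * f0 K) * (Phi3 K * Phi3 K) * dagger c g * Phi3 K := by noncomm_ring
        rw [this, hPhi, mul_one, hf]
      calc g * (f0 K * Phi3 K)
          = g * (f0 K * Phi3 K) * ((Phi3 K * dagger c g * Phi3 K) * g) := by rw [hhg, mul_one]
        _ = (g * (f0 K * Phi3 K) * (Phi3 K * dagger c g * Phi3 K)) * g := by noncomm_ring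
        _ = (f0 K * Phi3 K) * g := by rw [h1]
    have e01 := congrFun (congrFun hE 0) 1
    have e21 := congrFun (congrFun hE 2) 1
    have e10 := congrFun (congrFun hE 1) 0
    have e12 := congrFun (congrFun hE 1) 2
    have e11 := congrFun (congrFun hf 1) 1
    simp [Matrix.mul_apply, f0, Phi3, dagger, Fin.sum_univ_three] at e01 e21 e10 e12 e11
    exact ⟨e01, e21, e10.symm, e12.symm, e11⟩
  · rintro ⟨h1, h2, h3, h4, h5⟩
    ext i j
    fin_cases i <;> fin_cases j <;>
      simp [Matrix.mul_apply, dagger, f0, Fin.sum_univ_three, h1, h2, h3, h4, h5, Matrix.vecHead, Matrix.vecTail]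
end

section
/- Let u ∈ K³ be a row vector and set s = ∑_{i,j} u_i·(Φ₃)_{ij}·c(u_j); assume s ≠ 0. Then the following are equivalent: (i) there exists a nonzero row vector w ∈ K³ with ∑_{i,j} w_i·(Φ₃)_{ij}·c(u_j) = 0 and ∑_{i,j} w_i·(Φ₃)_{ij}·c(w_j) = 0, i.e. the orthogonal complement of u with respect to the Hermitian form of Φ₃ contains a nonzero isotropic vector (the complement ⟨u⟩⊥ is a split 2-dimensional Hermitian space); (ii) there exists t ∈ K with −s = t·c(t), i.e. −s ∈ N_{K/F}(Kˣ). (This is the observation distinguishing the two U(Φ₃)-orbits on rank-one elements in Section 5.2.) -/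
open Matrix

section Aux

variable {K : Type*} [Field K]

/-- Forward direction in scalar form: from a nonzero isotropic vector orthogonal to `u`
we produce `t` with `u0 c(u2) + u1 c(u1) + u2 c(u0) = t c(t)`. -/
theorem aux_fwd (c : K ≃+* K) (hcc : ∀ x, c (c x) = x) (u0 u1 u2 w0 w1 w2 : K)
    (hw : ¬(w0 = 0 ∧ w1 = 0 ∧ w2 = 0))
    (ho : w0 * c u2 + w1 * c u1 + w2 * c u0 = 0)
    (hi : w0 * c w2 + w1 * c w1 + w2 * c w0 = 0) :
    ∃ t : K, u0 * c u2 + u1 * c u1 + u2 * c u0 = t * c t := by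
  have hcz : ∀ x : K, c x = 0 → x = 0 := by
    intro x hx
    have := congrArg c hx
    rwa [hcc, map_zero] at this
  have hoC : c w0 * u2 + c w1 * u1 + c w2 * u0 = 0 := by
    have := congrArg c ho
    simpa [_root_.map_add, _root_.map_mul, hcc] using this
  by_cases h0 : w0 = 0
  · by_cases h2 : w2 = 0
    · exfalso
      apply hw
      have h1 : w1 = 0 := by
        have hmul : w1 * c w1 = 0 := by rw [h0, h2] at hi; linear_combination hi
        rcases mul_eq_zero.mp hmul with h | h
        · exact h
        · exact hcz _ h
      exact ⟨h0, h1, h2⟩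
    · refine ⟨(u1 * w2 - u2 * w1) / w2, ?_⟩
      have hc2 : c w2 ≠ 0 := fun h => h2 (hcz _ h)
      rw [_root_.map_div₀, _root_.map_sub, _root_.map_mul, _root_.map_mul]
      field_simp
      linear_combination (u2 * c w2) * ho + (c u2 * w2) * hoC - (u2 * c u2) * hi
  · refine ⟨(u0 * w1 - u1 * w0) / w0, ?_⟩
    have hc0 : c w0 ≠ 0 := fun h => h0 (hcz _ h)
    rw [_root_.map_div₀, _root_.map_sub, _root_.map_mul, _root_.map_mul]
    field_simp
    linear_combination (u0 * c w0) * ho + (c u0 * w0) * hoC - (u0 * c u0) * hi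

/-- Reverse direction in scalar form: from `t` with `-s = N(t)` we produce a nonzero
isotropic vector orthogonal to `u`. -/
theorem aux_rev (c : K ≃+* K) (hcc : ∀ x, c (c x) = x) (u0 u1 u2 t : K)
    (hS : u0 * c u2 + u1 * c u1 + u2 * c u0 ≠ 0)
    (ht : u0 * c u2 + u1 * c u1 + u2 * c u0 = t * c t) :
    ∃ w0 w1 w2 : K, ¬(w0 = 0 ∧ w1 = 0 ∧ w2 = 0) ∧
      w0 * c u2 + w1 * c u1 + w2 * c u0 = 0 ∧
      w0 * c w2 + w1 * c w1 + w2 * c w0 = 0 := by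
  have hcz : ∀ x : K, c x = 0 → x = 0 := by
    intro x hx
    have := congrArg c hx
    rwa [hcc, map_zero] at this
  have ht0 : t ≠ 0 := by
    intro h
    apply hS
    rw [ht, h, zero_mul]
  set S : K := u0 * c u2 + u1 * c u1 + u2 * c u0 with hSdef
  have hcS : c S = S := by
    rw [hSdef]
    simp only [_root_.map_add, _root_.map_mul, hcc]
    ring
  by_cases h2 : u2 = 0
  · by_cases h0 : u0 = 0
    · refine ⟨1, 0, 0, ?_, ?_, ?_⟩
      · rintro ⟨h, -, -⟩; exact one_ne_zero h
      · rw [h2, map_zero]; ring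
      · simp
    · -- u2 = 0, u0 ≠ 0
      have hv2 : c u2 = 0 := by rw [h2, map_zero]
      refine ⟨t * u0 * c u0, (t * u1 - S) * c u0, -(S * (t - c u1)), ?_, ?_, ?_⟩
      · rintro ⟨h, -, -⟩
        rcases mul_eq_zero.mp h with h | h
        · rcases mul_eq_zero.mp h with h | h
          · exact ht0 h
          · exact h0 h
        · exact h0 (hcz _ h)
      · linear_combination (-(t * c u0 * c u0)) * h2 - (t * c u0) * hSdef
      · have hc1 : c ((t * u1 - S) * c u0) = (c t * c u1 - S) * u0 := by
          rw [_root_.map_mul, _root_.map_sub, _root_.map_mul, hcc, hcS]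
        have hc0 : c (t * u0 * c u0) = c t * c u0 * u0 := by
          rw [_root_.map_mul, _root_.map_mul, hcc]
        have hc2 : c (-(S * (t - c u1))) = -(S * (c t - u1)) := by
          rw [_root_.map_neg, _root_.map_mul, _root_.map_sub, hcc, hcS]
        rw [hc0, hc1, hc2]
        linear_combination (u0 * c u0 * S) * ht - (u0 * c u0 * t * c t) * hSdef -
          (u0 * u0 * c u0 * t * c t) * hv2 - (u0 * c u0 * c u0 * t * c t) * h2
  · -- u2 ≠ 0
    refine ⟨t * u0 * c u2 - S * (t - c u1), (t * u1 - S) * c u2, t * u2 * c u2, ?_, ?_, ?_⟩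
    · rintro ⟨-, -, h⟩
      rcases mul_eq_zero.mp h with h | h
      · rcases mul_eq_zero.mp h with h | h
        · exact ht0 h
        · exact h2 h
      · exact h2 (hcz _ h)
    · linear_combination (-(t * c u2)) * hSdef
    · have hc0 : c (t * u0 * c u2 - S * (t - c u1)) = c t * c u0 * u2 - S * (c t - u1) := by
        rw [_root_.map_sub, _root_.map_mul, _root_.map_mul, _root_.map_mul, _root_.map_sub, hcc, hcc, hcS]
      have hc1 : c ((t * u1 - S) * c u2) = (c t * c u1 - S) * u2 := by
        rw [_root_.map_mul, _root_.map_sub, _root_.map_mul, hcc, hcS]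
      have hc2 : c (t * u2 * c u2) = c t * c u2 * u2 := by
        rw [_root_.map_mul, _root_.map_mul, hcc]
      rw [hc0, hc1, hc2]
      linear_combination (u2 * c u2 * S) * ht - (u2 * c u2 * t * c t) * hSdef

end Aux

/-- `K` is a field of characteristic zero with a ring automorphism `c` satisfying `c ∘ c = id`
and `c ≠ id`.  Let `u ∈ K³` be a row vector with `s = ∑ u i (Φ₃) i j c (u j) ≠ 0`.  Then
the following are equivalent: (i) there is a nonzero `w ∈ K³` orthogonal to `u` for the
Hermitian form of `Φ₃` and isotropic (so `⟨u⟩⊥` is a split 2-dimensional Hermitian space);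
(ii) there exists `t ∈ K` with `-s = t · c t`, i.e. `-s ∈ N_{K/F}(Kˣ)`. -/
theorem orthogonal_complement_split_iff_norm
    {K : Type*} [Field K] [CharZero K] (c : K ≃+* K)
    (hcc : ∀ x, c (c x) = x) (hne : (c : K → K) ≠ id)
    (u : Fin 3 → K)
    (hs : ∑ i, ∑ j, u i * Phi3 K i j * c (u j) ≠ 0) :
    (∃ w : Fin 3 → K, w ≠ 0 ∧
        (∑ i, ∑ j, w i * Phi3 K i j * c (u j)) = 0 ∧
        (∑ i, ∑ j, w i * Phi3 K i j * c (w j)) = 0) ↔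
      ∃ t : K, -(∑ i, ∑ j, u i * Phi3 K i j * c (u j)) = t * c t := by
  have expand : ∀ v w : Fin 3 → K,
      (∑ i, ∑ j, v i * Phi3 K i j * c (w j))
        = -(v 0 * c (w 2) + v 1 * c (w 1) + v 2 * c (w 0)) := by
    intro v w
    simp [Phi3, Fin.sum_univ_three, Matrix.cons_val_zero, Matrix.cons_val_one, Matrix.head_cons, Matrix.vecHead, Matrix.vecTail]
    ring
  simp only [expand] at hs ⊢
  rw [neg_ne_zero] at hs
  constructor
  · rintro ⟨w, hw, ho, hi⟩
    rw [neg_eq_zero] at ho hi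
    obtain ⟨t, htt⟩ := aux_fwd c hcc (u 0) (u 1) (u 2) (w 0) (w 1) (w 2)
      (fun ⟨h0, h1, h2⟩ => hw (by
        funext i
        fin_cases i <;> simpa [h0, h1, h2]))
      ho hi
    exact ⟨t, by rw [neg_neg]; exact htt⟩
  · rintro ⟨t, htt⟩
    rw [neg_neg] at htt
    obtain ⟨w0, w1, w2, hwne, ho, hi⟩ := aux_rev c hcc (u 0) (u 1) (u 2) t hs htt
    refine ⟨![w0, w1, w2], ?_, ?_, ?_⟩
    · intro h
      exact hwne ⟨congrFun h 0, congrFun h 1, congrFun h 2⟩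
    · show -(w0 * c (u 2) + w1 * c (u 1) + w2 * c (u 0)) = 0
      rw [ho, neg_zero]
    · show -(w0 * c w2 + w1 * c w1 + w2 * c w0) = 0
      rw [hi, neg_zero]
end
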